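/- arXiv:2108.04205 — 2 statements merged into one kernel-verified Lean document; each statement's English description precedes it below -/
import Mathlib

section
/- Fix M, nodes θᵢᴹ and strictly positive weights αᵢᴹ. The map sending (x̄ᵢ, λ̄ᵢ) to (x̄ᵢ, λ̄ᵢ/αᵢᴹ) for i = 1,…,M is a bijection between solutions of the costate system λ̄ᵢ'(t) = −∂H̄ᴹ/∂xᵢ, λ̄ᵢ(T) = αᵢᴹ ∂F/∂x(x̄ᵢ(T), θᵢᴹ) and solutions of the rescaled costate system λ̃ᵢ'(t) = −(1/αᵢᴹ) ∂H̃ᴹ/∂xᵢ, λ̃ᵢ(T) = ∂F/∂x(x̃ᵢ(T), θᵢᴹ), where H̄ᴹ(X,Λ,u,t) = Σᵢ [λᵢ·f(xᵢ,u,θᵢᴹ) + αᵢᴹ r(xᵢ,u,t,θᵢᴹ)] and H̃ᴹ(X,Λ,u,t) = Σᵢ αᵢᴹ [λᵢ·f(xᵢ,u,θᵢᴹ) + r(xᵢ,u,t,θᵢᴹ)]. Moreover, under this map H̄ᴹ evaluated at (X̄, Λ̄) equals H̃ᴹ evaluated at the image (X̃, Λ̃). -/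
open Set Real Finset RealInnerProductSpace

theorem stmt_5 (nx nu np M : ℕ)
    (f : EuclideanSpace ℝ (Fin nx) → EuclideanSpace ℝ (Fin nu) → EuclideanSpace ℝ (Fin np) →
      EuclideanSpace ℝ (Fin nx))
    (r : EuclideanSpace ℝ (Fin nx) → EuclideanSpace ℝ (Fin nu) → ℝ → EuclideanSpace ℝ (Fin np) → ℝ)
    (F : EuclideanSpace ℝ (Fin nx) → EuclideanSpace ℝ (Fin np) → ℝ)
    (hf : ContDiff ℝ 1 (fun p : EuclideanSpace ℝ (Fin nx) × EuclideanSpace ℝ (Fin nu) ×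
      EuclideanSpace ℝ (Fin np) => f p.1 p.2.1 p.2.2))
    (hr : ContDiff ℝ 1 (fun p : EuclideanSpace ℝ (Fin nx) × EuclideanSpace ℝ (Fin nu) × ℝ ×
      EuclideanSpace ℝ (Fin np) => r p.1 p.2.1 p.2.2.1 p.2.2.2))
    (hF : ContDiff ℝ 1 (fun p : EuclideanSpace ℝ (Fin nx) × EuclideanSpace ℝ (Fin np) => F p.1 p.2))
    (θ : Fin M → EuclideanSpace ℝ (Fin np)) (α : Fin M → ℝ) (hα : ∀ i, 0 < α i)
    (T : ℝ) :
    ∀ (X Λbar Λtil : Fin M → ℝ → EuclideanSpace ℝ (Fin nx))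
      (u : ℝ → EuclideanSpace ℝ (Fin nu)),
      (∀ i t, Λtil i t = (α i)⁻¹ • Λbar i t) →
      -- the scaling map is a bijection between solutions of the two costate systems:
      (((∀ i t, HasDerivAt (Λbar i)
            (-(gradient (fun y => ∑ j, (⟪Λbar j t,
                f (Function.update (fun k => X k t) i y j) (u t) (θ j)⟫ +
                α j * r (Function.update (fun k => X k t) i y j) (u t) t (θ j)))
              (X i t))) t) ∧
        (∀ i, Λbar i T = α i • gradient (fun y => F y (θ i)) (X i T)))
       ↔
       ((∀ i t, HasDerivAt (Λtil i)
            (-((α i)⁻¹ • gradient (fun y => ∑ j, α j •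
                (⟪Λtil j t, f (Function.update (fun k => X k t) i y j) (u t) (θ j)⟫ +
                 r (Function.update (fun k => X k t) i y j) (u t) t (θ j)))
              (X i t))) t) ∧
        (∀ i, Λtil i T = gradient (fun y => F y (θ i)) (X i T)))) ∧
      -- and the two Hamiltonians agree under this map:
      (∀ t, ∑ i, (⟪Λbar i t, f (X i t) (u t) (θ i)⟫ + α i * r (X i t) (u t) t (θ i)) =
            ∑ i, α i * (⟪Λtil i t, f (X i t) (u t) (θ i)⟫ + r (X i t) (u t) t (θ i))) := by
 
  intro X Λbar Λtil u hscale
  have hne : ∀ i, (α i : ℝ) ≠ 0 := fun i => (hα i).ne'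
  have key : ∀ (i : Fin M) (t : ℝ) (y : EuclideanSpace ℝ (Fin nx)),
      (∑ j, α j • (⟪Λtil j t, f (Function.update (fun k => X k t) i y j) (u t) (θ j)⟫ +
        r (Function.update (fun k => X k t) i y j) (u t) t (θ j))) =
      ∑ j, (⟪Λbar j t, f (Function.update (fun k => X k t) i y j) (u t) (θ j)⟫ +
        α j * r (Function.update (fun k => X k t) i y j) (u t) t (θ j)) := by
    intro i t y
    refine Finset.sum_congr rfl fun j _ => ?_
    rw [hscale, real_inner_smul_left, smul_eq_mul]
    field_simp [hne j]
  have hgrad : ∀ (i : Fin M) (t : ℝ),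
      gradient (fun y => ∑ j, α j • (⟪Λtil j t,
          f (Function.update (fun k => X k t) i y j) (u t) (θ j)⟫ +
          r (Function.update (fun k => X k t) i y j) (u t) t (θ j))) (X i t) =
      gradient (fun y => ∑ j, (⟪Λbar j t,
          f (Function.update (fun k => X k t) i y j) (u t) (θ j)⟫ +
          α j * r (Function.update (fun k => X k t) i y j) (u t) t (θ j))) (X i t) := by
    intro i t
    congr 1
    funext y
    exact key i t y
  constructor
  · constructor
    · rintro ⟨hd, hT⟩
      constructor
      · intro i t
        have h1 : Λtil i = fun s => (α i)⁻¹ • Λbar i s := funext fun s => hscale i s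
        rw [h1, hgrad]
        have h2 := (hd i t).const_smul ((α i)⁻¹)
        rw [smul_neg] at h2
        exact h2
      · intro i
        rw [hscale, hT, smul_smul, inv_mul_cancel₀ (hne i), one_smul]
    · rintro ⟨hd, hT⟩
      constructor
      · intro i t
        have h1 : Λbar i = fun s => α i • Λtil i s := by
          funext s; rw [hscale, smul_smul, mul_inv_cancel₀ (hne i), one_smul]
        rw [h1]
        have h2 := (hd i t).const_smul (α i)
        rw [smul_neg, smul_smul, mul_inv_cancel₀ (hne i), one_smul, hgrad i t] at h2
        exact h2
      · intro i
        rw [eq_comm, ← hT i, hscale, smul_smul, mul_inv_cancel₀ (hne i), one_smul]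
  · intro t
    refine Finset.sum_congr rfl fun i _ => ?_
    rw [hscale, real_inner_smul_left]
    field_simp [hne i]
end

section
/- Let f be bounded and Lipschitz in x with constant L on [0,T], and let u_M → u^∞ pointwise a.e. with all u_M uniformly bounded. Let x_M solve x_M'(t) = f(x_M(t), u_M(t)), x_M(0) = x₀, and x^∞ solve (x^∞)'(t) = f(x^∞(t), u^∞(t)), x^∞(0) = x₀, where f is additionally continuous in u. Then x_M → x^∞ uniformly on [0,T]. -/
open Set Real Filter MeasureTheory intervalIntegral

theorem stmt_7 (n m : ℕ) (T L C B : ℝ) (hT : 0 ≤ T)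
    (f : EuclideanSpace ℝ (Fin n) → EuclideanSpace ℝ (Fin m) → EuclideanSpace ℝ (Fin n))
    (hfcont : Continuous fun p : EuclideanSpace ℝ (Fin n) × EuclideanSpace ℝ (Fin m) => f p.1 p.2)
    (hfbdd : ∀ x u, ‖f x u‖ ≤ C)
    (hfLip : ∀ u x y, ‖f x u - f y u‖ ≤ L * ‖x - y‖)
    (x₀ : EuclideanSpace ℝ (Fin n))
    (u : ℕ → ℝ → EuclideanSpace ℝ (Fin m)) (uinf : ℝ → EuclideanSpace ℝ (Fin m))
    (humeas : ∀ M, Measurable (u M)) (huinfmeas : Measurable uinf)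
    (hubdd : ∀ M t, ‖u M t‖ ≤ B)
    (hulim : ∀ᵐ t ∂(volume.restrict (Icc 0 T)),
      Tendsto (fun M => u M t) atTop (nhds (uinf t)))
    (x : ℕ → ℝ → EuclideanSpace ℝ (Fin n)) (xinf : ℝ → EuclideanSpace ℝ (Fin n))
    (hx : ∀ M, ∀ t ∈ Icc 0 T, x M t = x₀ + ∫ s in (0:ℝ)..t, f (x M s) (u M s))
    (hxcont : ∀ M, ContinuousOn (x M) (Icc 0 T))
    (hxinf : ∀ t ∈ Icc 0 T, xinf t = x₀ + ∫ s in (0:ℝ)..t, f (xinf s) (uinf s))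
    (hxinfcont : ContinuousOn xinf (Icc 0 T)) :
    TendstoUniformlyOn (fun M t => x M t) xinf atTop (Icc 0 T) := by
  -- replace L by max L 0
  set L' : ℝ := max L 0 with hL'def
  have hL' : 0 ≤ L' := le_max_right _ _
  have hfLip' : ∀ v a b, ‖f a v - f b v‖ ≤ L' * ‖a - b‖ := fun v a b =>
    (hfLip v a b).trans (mul_le_mul_of_nonneg_right (le_max_left _ _) (norm_nonneg _))
  -- projection onto [0,T]
  set pj : ℝ → ℝ := fun s => min (max s 0) T with hpjdef
  have hpjcont : Continuous pj := (continuous_id.max continuous_const).min continuous_const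
  have hpjmem : ∀ s, pj s ∈ Icc 0 T := fun s =>
    ⟨le_min (le_max_right _ _) hT, min_le_right _ _⟩
  have hpjid : ∀ t ∈ Icc 0 T, pj t = t := fun t ht => by
    simp [hpjdef, max_eq_left ht.1, min_eq_left ht.2]
  -- extended difference norm
  set g : ℕ → ℝ → ℝ := fun M s => ‖x M (pj s) - xinf (pj s)‖ with hgdef
  have hgcont : ∀ M, Continuous (g M) := by
    intro M
    have h1 : Continuous fun s => x M (pj s) :=
      (hxcont M).comp_continuous hpjcont hpjmem
    have h2 : Continuous fun s => xinf (pj s) :=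
      hxinfcont.comp_continuous hpjcont hpjmem
    exact (h1.sub h2).norm
  have hgnonneg : ∀ M s, 0 ≤ g M s := fun M s => norm_nonneg _
  -- generic integrability
  have key_meas : ∀ (y : ℝ → EuclideanSpace ℝ (Fin n)) (v : ℝ → EuclideanSpace ℝ (Fin m)),
      ContinuousOn y (Icc 0 T) → Measurable v →
      IntegrableOn (fun s => f (y s) (v s)) (Icc 0 T) := by
    intro y v hy hv
    have hym : AEMeasurable y (volume.restrict (Icc 0 T)) := hy.aemeasurable measurableSet_Icc
    have hmeas : AEMeasurable (fun s => f (y s) (v s)) (volume.restrict (Icc 0 T)) :=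
      hfcont.measurable.comp_aemeasurable (hym.prodMk hv.aemeasurable)
    refine Integrable.mono' (integrableOn_const measure_Icc_lt_top.ne)
      hmeas.aestronglyMeasurable (Eventually.of_forall fun s => hfbdd _ _)
  have key_int : ∀ (y : ℝ → EuclideanSpace ℝ (Fin n)) (v : ℝ → EuclideanSpace ℝ (Fin m)),
      ContinuousOn y (Icc 0 T) → Measurable v → ∀ t ∈ Icc 0 T,
      IntervalIntegrable (fun s => f (y s) (v s)) volume 0 t := by
    intro y v hy hv t ht
    refine IntegrableOn.intervalIntegrable ?_
    rw [uIcc_of_le ht.1]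
    exact (key_meas y v hy hv).mono_set (Icc_subset_Icc_right ht.2)
  -- the error term
  set h : ℕ → ℝ → ℝ := fun M s => ‖f (xinf s) (u M s) - f (xinf s) (uinf s)‖ with hhdef
  have hmeash : ∀ M, AEStronglyMeasurable (h M) (volume.restrict (Icc 0 T)) := by
    intro M
    have hxm : AEMeasurable xinf (volume.restrict (Icc 0 T)) :=
      hxinfcont.aemeasurable measurableSet_Icc
    have h1 : AEMeasurable (fun s => f (xinf s) (u M s)) (volume.restrict (Icc 0 T)) :=
      hfcont.measurable.comp_aemeasurable (hxm.prodMk (humeas M).aemeasurable)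
    have h2 : AEMeasurable (fun s => f (xinf s) (uinf s)) (volume.restrict (Icc 0 T)) :=
      hfcont.measurable.comp_aemeasurable (hxm.prodMk huinfmeas.aemeasurable)
    exact ((h1.sub h2).norm).aestronglyMeasurable
  have hhbdd : ∀ M s, h M s ≤ 2 * C := by
    intro M s
    calc h M s ≤ ‖f (xinf s) (u M s)‖ + ‖f (xinf s) (uinf s)‖ := norm_sub_le _ _
      _ ≤ C + C := add_le_add (hfbdd _ _) (hfbdd _ _)
      _ = 2 * C := by ring
  have hhint : ∀ M, IntegrableOn (h M) (Icc 0 T) := by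
    intro M
    refine Integrable.mono' (g := fun _ => 2 * C)
      (integrableOn_const measure_Icc_lt_top.ne)
      (hmeash M) (Eventually.of_forall fun s => ?_)
    rw [Real.norm_eq_abs, abs_of_nonneg (norm_nonneg _)]
    exact hhbdd M s
  set ε' : ℕ → ℝ := fun M => ∫ s in Icc 0 T, h M s with hε'def
  have hε'nonneg : ∀ M, 0 ≤ ε' M :=
    fun M => setIntegral_nonneg measurableSet_Icc fun s _ => norm_nonneg _
  -- ε' M → 0
  have hε'lim : Tendsto ε' atTop (nhds 0) := by
    have := MeasureTheory.tendsto_integral_of_dominated_convergence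
      (μ := volume.restrict (Icc 0 T)) (F := fun M s => h M s) (f := fun _ => (0:ℝ))
      (fun _ => 2 * C) hmeash
      (integrableOn_const measure_Icc_lt_top.ne)
      (fun M => Eventually.of_forall fun s => by
        rw [Real.norm_eq_abs, abs_of_nonneg (norm_nonneg _)]; exact hhbdd M s)
      (by
        filter_upwards [hulim] with t ht
        have hc : Continuous fun v => f (xinf t) v :=
          hfcont.comp (Continuous.prodMk_right _)
        have h1 : Tendsto (fun M => f (xinf t) (u M t)) atTop
            (nhds (f (xinf t) (uinf t))) := (hc.tendsto _).comp ht
        have h0 : Tendsto (fun M => f (xinf t) (u M t) - f (xinf t) (uinf t)) atTop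
            (nhds (f (xinf t) (uinf t) - f (xinf t) (uinf t))) :=
          h1.sub tendsto_const_nhds
        rw [sub_self] at h0
        simpa using h0.norm)
    simpa using this
  -- key Gronwall inequality: g M t ≤ ε' M * exp (L' * T) on [0,T]
  have key : ∀ M, ∀ t ∈ Icc 0 T, g M t ≤ ε' M * Real.exp (L' * T) := by
    intro M
    set φ : ℝ → ℝ := fun t => ∫ s in (0:ℝ)..t, g M s with hφdef
    have hφderiv : ∀ t, HasDerivAt φ (g M t) t := fun t =>
      ((hgcont M).integral_hasStrictDerivAt 0 t).hasDerivAt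
    have hφnonneg : ∀ t ∈ Icc 0 T, 0 ≤ φ t := fun t ht =>
      intervalIntegral.integral_nonneg ht.1 fun s _ => hgnonneg M s
    -- integral inequality: g M t ≤ L' * φ t + ε' M for t ∈ [0,T]
    have hineq : ∀ t ∈ Icc 0 T, g M t ≤ L' * φ t + ε' M := by
      intro t ht
      have hI1 := key_int (x M) (u M) (hxcont M) (humeas M) t ht
      have hI2 := key_int xinf uinf hxinfcont huinfmeas t ht
      have hsub : x M t - xinf t
          = ∫ s in (0:ℝ)..t, (f (x M s) (u M s) - f (xinf s) (uinf s)) := by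
        rw [hx M t ht, hxinf t ht, intervalIntegral.integral_sub hI1 hI2]
        abel
      have hgeq : g M t = ‖x M t - xinf t‖ := by rw [hgdef]; simp [hpjid t ht]
      have hgInt : IntervalIntegrable (fun s => L' * g M s) volume 0 t :=
        ((hgcont M).intervalIntegrable 0 t).const_mul L'
      have hhMInt : IntervalIntegrable (h M) volume 0 t := by
        refine IntegrableOn.intervalIntegrable ?_
        rw [uIcc_of_le ht.1]
        exact (hhint M).mono_set (Icc_subset_Icc_right ht.2)
      have hhInt : IntervalIntegrable (fun s => L' * g M s + h M s) volume 0 t :=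
        hgInt.add hhMInt
      calc g M t = ‖∫ s in (0:ℝ)..t, (f (x M s) (u M s) - f (xinf s) (uinf s))‖ := by
            rw [hgeq, hsub]
        _ ≤ ∫ s in (0:ℝ)..t, ‖f (x M s) (u M s) - f (xinf s) (uinf s)‖ :=
            intervalIntegral.norm_integral_le_integral_norm ht.1
        _ ≤ ∫ s in (0:ℝ)..t, (L' * g M s + h M s) := by
            refine intervalIntegral.integral_mono_on ht.1 (hI1.sub hI2).norm hhInt ?_
            intro s hs
            have hsT : s ∈ Icc 0 T := ⟨hs.1, hs.2.trans ht.2⟩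
            have hgs : g M s = ‖x M s - xinf s‖ := by rw [hgdef]; simp [hpjid s hsT]
            calc ‖f (x M s) (u M s) - f (xinf s) (uinf s)‖
                ≤ ‖f (x M s) (u M s) - f (xinf s) (u M s)‖ +
                  ‖f (xinf s) (u M s) - f (xinf s) (uinf s)‖ := by
                  have := norm_sub_le_norm_sub_add_norm_sub
                    (f (x M s) (u M s)) (f (xinf s) (u M s)) (f (xinf s) (uinf s))
                  exact this
              _ ≤ L' * ‖x M s - xinf s‖ + h M s :=
                  add_le_add (hfLip' _ _ _) le_rfl
              _ = L' * g M s + h M s := by rw [hgs]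
        _ = L' * φ t + ∫ s in (0:ℝ)..t, h M s := by
            rw [intervalIntegral.integral_add hgInt hhMInt,
              intervalIntegral.integral_const_mul]
        _ ≤ L' * φ t + ε' M := by
            gcongr
            rw [intervalIntegral.integral_of_le ht.1]
            refine setIntegral_mono_set (hhint M) (Eventually.of_forall fun s => norm_nonneg _)
              (HasSubset.Subset.eventuallyLE ?_)
            exact (Ioc_subset_Icc_self).trans (Icc_subset_Icc_right ht.2)
    -- Gronwall
    have hgron := norm_le_gronwallBound_of_norm_deriv_right_le (a := 0) (b := T)
      (f := φ) (f' := g M) (δ := 0) (K := L') (ε := ε' M)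
      (Continuous.continuousOn
        (continuous_iff_continuousAt.mpr fun t => (hφderiv t).continuousAt))
      (fun t _ => (hφderiv t).hasDerivWithinAt)
      (by simp [hφdef])
      (fun t htI => by
        have ht : t ∈ Icc 0 T := ⟨htI.1, le_of_lt htI.2⟩
        rw [Real.norm_eq_abs, Real.norm_eq_abs, abs_of_nonneg (hgnonneg M t),
          abs_of_nonneg (hφnonneg t ht)]
        exact hineq t ht)
    intro t ht
    have hφb := hgron t ht
    rw [Real.norm_eq_abs, abs_of_nonneg (hφnonneg t ht), sub_zero] at hφb
    have h1 : g M t ≤ L' * gronwallBound 0 L' (ε' M) t + ε' M := by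
      exact (hineq t ht).trans
        (add_le_add (mul_le_mul_of_nonneg_left hφb hL') le_rfl)
    refine h1.trans ?_
    by_cases hK : L' = 0
    · simp [hK, gronwallBound_K0]
    · rw [gronwallBound_of_K_ne_0 hK]
      have hLpos : 0 < L' := lt_of_le_of_ne hL' (Ne.symm hK)
      have : L' * (0 * Real.exp (L' * t) + ε' M / L' * (Real.exp (L' * t) - 1)) + ε' M
          = ε' M * Real.exp (L' * t) := by
        field_simp
        ring
      rw [this]
      have := Real.exp_le_exp.mpr (mul_le_mul_of_nonneg_left ht.2 hL')
      exact mul_le_mul_of_nonneg_left this (hε'nonneg M)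
  -- conclude uniform convergence
  rw [Metric.tendstoUniformlyOn_iff]
  intro ε hε
  have hlim2 : Tendsto (fun M => ε' M * Real.exp (L' * T)) atTop (nhds 0) := by
    simpa using hε'lim.mul_const (Real.exp (L' * T))
  filter_upwards [hlim2.eventually (eventually_lt_nhds hε)] with M hM t ht
  have hgt : g M t = dist (xinf t) (x M t) := by
    rw [hgdef, dist_eq_norm]
    simp [hpjid t ht, norm_sub_rev]
  calc dist (xinf t) (x M t) = g M t := hgt.symm
    _ ≤ ε' M * Real.exp (L' * T) := key M t ht
    _ < ε := hM
end
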